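/- Let k be a positive integer and r > 0, and let P_1,…,P_k be the steps of a (k,r)-staircase. Suppose x ∈ ℝ^2 and x_1,…,x_m are distinct points (all distinct from x) such that exactly k of the points x_1,…,x_m lie in the closed square x + [−r,r]^2 and each translated step x + P_j contains exactly one of these k points in its interior. Then in the (π/2)-Yao graph of the point set {x, x_1,…,x_m} the degree of x is at least k. -/

import Mathlib

/-!
Every step point `y` lies in the open square `x + (0, r)²` and has `x` in its third
(lower-left) cone. By the count, the step points are the only points of `x + [-r, r]²`, and
the staircase shape keeps every other step point out of that cone of `y`. A point of the cone
outside the square is more than `r` beyond `x` in some coordinate, so it is farther from `y`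
than `x` is. Hence each of the `k` step points chooses `x`.
-/

open MeasureTheory Filter

noncomputable section

/-- The Euclidean plane. -/
abbrev E2 := EuclideanSpace ℝ (Fin 2)

/-- `w` lies in the `q`-th cone of `u`: the angle of `w - u`, measured counterclockwise
from the positive x-direction, lies in `[qπ/2, (q+1)π/2)`.  We express this condition on
each quadrant directly by sign conditions on the coordinates of `w - u`. -/
def inCone (u w : E2) (q : Fin 4) : Prop :=
  (q = 0 ∧ 0 < w 0 - u 0 ∧ 0 ≤ w 1 - u 1) ∨
  (q = 1 ∧ w 0 - u 0 ≤ 0 ∧ 0 < w 1 - u 1) ∨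
  (q = 2 ∧ w 0 - u 0 < 0 ∧ w 1 - u 1 ≤ 0) ∨
  (q = 3 ∧ 0 ≤ w 0 - u 0 ∧ w 1 - u 1 < 0)

/-- `X j` is chosen by `X i` in the `(π/2)`-Yao graph: for some cone of `X i` containing
`X j`, no point of the set lying in that cone is strictly closer to `X i` than `X j`. -/
def yaoDir {n : ℕ} (X : Fin n → E2) (i j : Fin n) : Prop :=
  ∃ q : Fin 4, inCone (X i) (X j) q ∧
    ∀ k : Fin n, inCone (X i) (X k) q → dist (X i) (X j) ≤ dist (X i) (X k)

/-- Undirected adjacency in the `(π/2)`-Yao graph. -/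
def yaoAdj {n : ℕ} (X : Fin n → E2) (i j : Fin n) : Prop :=
  yaoDir X i j ∨ yaoDir X j i

/-- Degree of vertex `i` in the `(π/2)`-Yao graph of the points `X`. -/
def yaoDeg {n : ℕ} (X : Fin n → E2) (i : Fin n) : ℕ :=
  Nat.card {j : Fin n // yaoAdj X i j}

/-- Maximal degree of the `(π/2)`-Yao graph of the points `X`. -/
def yaoMaxDeg {n : ℕ} (X : Fin n → E2) : ℕ :=
  Finset.univ.sup (yaoDeg X)

/-- The `j`-th step of a `(k,r)`-staircase (for `j = 1, …, k`):
`P_j = [(j−1)r/k, jr/k] × [r − jr/k, r − (j−1)r/k]`. -/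
def step (k : ℕ) (r : ℝ) (j : ℝ) : Set E2 :=
  {z | z 0 ∈ Set.Icc ((j - 1) * r / k) (j * r / k) ∧
       z 1 ∈ Set.Icc (r - j * r / k) (r - (j - 1) * r / k)}

/-- The closed square `[−r, r]^2`. -/
def closedSquare (r : ℝ) : Set E2 :=
  {z | z 0 ∈ Set.Icc (-r) r ∧ z 1 ∈ Set.Icc (-r) r}

open Set

lemma inCone_two_iff {u w : E2} : inCone u w 2 ↔ w 0 - u 0 < 0 ∧ w 1 - u 1 ≤ 0 := by
  simp [inCone]

lemma interior_step (k : ℕ) (r j : ℝ) :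
    interior (step k r j) =
      {z | z 0 ∈ Ioo ((j - 1) * r / k) (j * r / k) ∧
        z 1 ∈ Ioo (r - j * r / k) (r - (j - 1) * r / k)} := by
  have hopen (i : Fin 2) := PiLp.isOpenMap_apply 2 (fun _ : Fin 2 => ℝ) i
  have hcont (i : Fin 2) : Continuous fun z : E2 => z i := PiLp.continuous_apply 2 _ i
  change interior ((fun z : E2 => z 0) ⁻¹' Icc _ _ ∩ (fun z : E2 => z 1) ⁻¹' Icc _ _) = _
  rw [interior_inter, ← (hopen 0).preimage_interior_eq_interior_preimage (hcont 0),
    ← (hopen 1).preimage_interior_eq_interior_preimage (hcont 1), interior_Icc, interior_Icc]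
  rfl

lemma mem_interior_step_succ_iff {k : ℕ} {r : ℝ} {j : ℕ} {z : E2} :
    z ∈ interior (step k r (j + 1)) ↔
      z 0 ∈ Ioo (j * (r / k)) ((j + 1) * (r / k)) ∧
        z 1 ∈ Ioo (r - (j + 1) * (r / k)) (r - j * (r / k)) := by
  simp only [interior_step, add_sub_cancel_right, mul_div_assoc, mem_ofPred_eq]

lemma lt_of_mem_interior_step_succ {k : ℕ} {r : ℝ} {i j : ℕ} {z w : E2}
    (hz : z ∈ interior (step k r (i + 1))) (hw : w ∈ interior (step k r (j + 1)))
    (hij : i < j) : z 0 < w 0 ∧ w 1 < z 1 := by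
  rw [mem_interior_step_succ_iff] at hz hw
  obtain ⟨⟨hz0, hz0'⟩, hz1, hz1'⟩ := hz
  obtain ⟨⟨hw0, hw0'⟩, hw1, hw1'⟩ := hw
  have hwidth : 0 < r / k := by linarith
  have hij' : (i : ℝ) + 1 ≤ j := by exact_mod_cast hij
  have := mul_le_mul_of_nonneg_right hij' hwidth.le
  constructor <;> linarith

lemma mem_Ioo_of_mem_interior_step_succ {k : ℕ} {r : ℝ} {j : ℕ} {z : E2}
    (hz : z ∈ interior (step k r (j + 1))) (hj : j < k) :
    z 0 ∈ Ioo 0 r ∧ z 1 ∈ Ioo 0 r := by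
  rw [mem_interior_step_succ_iff] at hz
  obtain ⟨⟨hz0, hz0'⟩, hz1, hz1'⟩ := hz
  have hwidth : 0 < r / k := by linarith
  have hk : 0 < k := (Nat.zero_le j).trans_lt hj
  have hr : (k : ℝ) * (r / k) = r := mul_div_cancel₀ r (by positivity)
  have hj' : (j : ℝ) + 1 ≤ k := by exact_mod_cast hj
  have := mul_le_mul_of_nonneg_right hj' hwidth.le
  have hj0 : 0 ≤ (j : ℝ) * (r / k) := by positivity
  refine ⟨⟨?_, ?_⟩, ?_, ?_⟩ <;> linarith

lemma eq_of_inCone_two_of_mem_interior_step {k : ℕ} {r : ℝ} {i j : ℕ} {x u w : E2}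
    (hu : u - x ∈ interior (step k r (i + 1))) (hw : w - x ∈ interior (step k r (j + 1)))
    (hcone : inCone u w 2) : i = j := by
  rw [inCone_two_iff] at hcone
  rcases lt_trichotomy i j with hij | hij | hij
  · have := (lt_of_mem_interior_step_succ hu hw hij).1
    simp only [PiLp.sub_apply] at this
    linarith
  · exact hij
  · have := (lt_of_mem_interior_step_succ hw hu hij).2
    simp only [PiLp.sub_apply] at this
    linarith

lemma dist_lt_of_inCone_two_of_notMem_closedSquare {r : ℝ} {x u w : E2}
    (hu0 : (u - x) 0 ∈ Ioo 0 r) (hu1 : (u - x) 1 ∈ Ioo 0 r)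
    (hcone : inCone u w 2) (hw : w - x ∉ closedSquare r) : dist u x < dist u w := by
  rw [inCone_two_iff] at hcone
  simp only [closedSquare, mem_ofPred_eq, mem_Icc, PiLp.sub_apply, not_and_or, not_le] at hw
  simp only [mem_Ioo, PiLp.sub_apply] at hu0 hu1
  rw [EuclideanSpace.dist_eq, EuclideanSpace.dist_eq]
  refine Real.sqrt_lt_sqrt (by positivity) ?_
  simp only [Fin.sum_univ_two, Real.dist_eq, sq_abs]
  -- with `(a, b) = u - x`: the far coordinate gap exceeds `a + r`, and `(a + r)² > a² + b²`
  rcases hw with (hw | hw) | (hw | hw)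
  · nlinarith
  · linarith
  · nlinarith
  · linarith

lemma card_le_yaoDeg {α : Type*} {n : ℕ} {X : Fin n → E2} {i : Fin n} {g : α → Fin n}
    (hg : Function.Injective g) (hadj : ∀ a, yaoAdj X i (g a)) : Nat.card α ≤ yaoDeg X i :=
  Nat.card_le_card_of_injective (fun a => ⟨g a, hadj a⟩) fun _ _ h =>
    hg (congrArg Subtype.val h)

section Staircase

variable {k m : ℕ} {r : ℝ} {x : E2} {p : Fin m → E2} {f : Fin k → Fin m}

lemma injective_of_mem_interior_step
    (hf : ∀ j : Fin k, p (f j) - x ∈ interior (step k r ((j : ℝ) + 1))) :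
    Function.Injective f :=
  Function.Injective.of_comp (f := fun i => (p i - x) 0)
    (StrictMono.injective fun i j h => (lt_of_mem_interior_step_succ (hf i) (hf j) h).1)

lemma mem_closedSquare_of_mem_interior_step
    (hf : ∀ j : Fin k, p (f j) - x ∈ interior (step k r ((j : ℝ) + 1))) (j : Fin k) :
    p (f j) - x ∈ closedSquare r := by
  obtain ⟨⟨h0, h0'⟩, h1, h1'⟩ := mem_Ioo_of_mem_interior_step_succ (hf j) j.isLt
  exact ⟨⟨by linarith, h0'.le⟩, ⟨by linarith, h1'.le⟩⟩

lemma exists_eq_of_mem_closedSquare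
    (hcount : Nat.card {i : Fin m // p i - x ∈ closedSquare r} = k)
    (hf : ∀ j : Fin k, p (f j) - x ∈ interior (step k r ((j : ℝ) + 1)))
    {i : Fin m} (hi : p i - x ∈ closedSquare r) : ∃ j, f j = i := by
  let g : Fin k → {i : Fin m // p i - x ∈ closedSquare r} :=
    fun j => ⟨f j, mem_closedSquare_of_mem_interior_step hf j⟩
  have hg : Function.Injective g := fun _ _ h =>
    injective_of_mem_interior_step hf (congrArg Subtype.val h)
  obtain ⟨j, hj⟩ := (hg.bijective_of_nat_card_le (by rw [hcount, Nat.card_fin])).2 ⟨i, hi⟩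
  exact ⟨j, congrArg Subtype.val hj⟩

lemma yaoDir_succ_zero_of_mem_interior_step
    (hcount : Nat.card {i : Fin m // p i - x ∈ closedSquare r} = k)
    (hf : ∀ j : Fin k, p (f j) - x ∈ interior (step k r ((j : ℝ) + 1))) (j : Fin k) :
    yaoDir (Fin.cons x p) (f j).succ 0 := by
  obtain ⟨hu0, hu1⟩ := mem_Ioo_of_mem_interior_step_succ (hf j) j.isLt
  refine ⟨2, ?_, fun l hl => ?_⟩
  · simp only [Fin.cons_succ, Fin.cons_zero, inCone_two_iff]
    simp only [mem_Ioo, PiLp.sub_apply] at hu0 hu1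
    constructor <;> linarith
  cases l using Fin.cases with
  | zero => exact le_rfl
  | succ i =>
    simp only [Fin.cons_succ, Fin.cons_zero] at hl ⊢
    by_cases hi : p i - x ∈ closedSquare r
    · obtain ⟨j', rfl⟩ := exists_eq_of_mem_closedSquare hcount hf hi
      obtain rfl : j = j' := Fin.ext (eq_of_inCone_two_of_mem_interior_step (hf j) (hf j') hl)
      simp [inCone_two_iff] at hl
    · exact (dist_lt_of_inCone_two_of_notMem_closedSquare hu0 hu1 hl hi).le

end Staircase

theorem staircase_yao_degree_general (k m : ℕ) (r : ℝ)
    (x : E2) (p : Fin m → E2)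
    (hcount : Nat.card {i : Fin m // p i - x ∈ closedSquare r} = k)
    (hsteps : ∀ j : Fin k, ∃! i : Fin m, p i - x ∈ interior (step k r ((j : ℝ) + 1))) :
    k ≤ yaoDeg (Fin.cons x p) 0 := by
  choose f hf using fun j => (hsteps j).exists
  have hinj : Function.Injective fun j => (f j).succ :=
    (Fin.succ_injective m).comp (injective_of_mem_interior_step hf)
  simpa using card_le_yaoDeg hinj fun j =>
    Or.inr (yaoDir_succ_zero_of_mem_interior_step hcount hf j)

/-- Suppose `x` and the distinct points `p 0, …, p (m-1)` (all
distinct from `x`) are such that exactly `k` of the points `p i` lie in the closed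
square `x + [−r,r]^2`, and each translated step `x + P_j` (`j = 1, …, k`) contains
exactly one of these `k` points in its interior.  Then in the `(π/2)`-Yao graph of the
point set `{x, p 0, …, p (m-1)}` the degree of `x` is at least `k`. -/
theorem staircase_yao_degree (k m : ℕ) (hk : 0 < k) (r : ℝ) (hr : 0 < r)
    (x : E2) (p : Fin m → E2) (hinj : Function.Injective p) (hx : ∀ i, p i ≠ x)
    (hcount : Nat.card {i : Fin m // p i - x ∈ closedSquare r} = k)
    (hsteps : ∀ j : Fin k, ∃! i : Fin m, p i - x ∈ interior (step k r ((j : ℝ) + 1))) :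
    k ≤ yaoDeg (Fin.cons x p) 0 :=
  staircase_yao_degree_general k m r x p hcount hsteps
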